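/- arXiv:1206.3120 — 2 statements merged into one kernel-verified Lean document; each statement's English description precedes it below -/
import Mathlib

section
/- Let x* ∈ B (so h(x*) = 1) and let C(x*) = {s ∈ ℝ^n : s_i ≥ 0 for all i, and ∑_{i=1}^n α_i(x*) s_i ≤ 1}, where α_i(x*) = (N̄_i − 1 + ∏_{j≠i}(1 + x*_j)) / (L_i N̄_i). Then C(x*) is the maximal convex subset of the rate region R containing s(x*, N̄): every convex set D with D ⊆ R and s(x*, N̄) ∈ D satisfies D ⊆ C(x*). -/
/-!
A rate vector `y` lies in `R` only if, with `β i = y i / (N̄ i * L i)`, some `τ > 0` satisfies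
`X(τ β, N̄) ≤ τ`: replacing the burst sizes by `N̄` while keeping the attempt totals `N i * x i`
can only lower `X`. For `y = s(x*, N̄)` the function `τ ↦ X(τ β, N̄) - τ` vanishes at
`τ = X(x*, N̄)`, the boundary condition `h(x*) = 1` says precisely that its slope vanishes there
too, and its curvature is positive because `x*` has two positive coordinates (forced by
`h(x*) = 1` and `a > 0`). Moving from `s(x*, N̄)` a short way towards a point `u` with
`∑ α_i u_i > 1` raises the value at `τ = X(x*, N̄)` at first order (at rate
`X(x*, N̄) (∑ α_i u_i - 1)`), whereas the square of the slope changes only at second order.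
So the quadratic lower bound of the function has negative discriminant, the function is positive
for all `τ ≥ 0`, and the point is not in `R`: a convex `D ⊆ R` through `s(x*, N̄)` cannot
contain such a `u`.
-/

open Finset

noncomputable def Xfun (n : ℕ) (a : ℝ) (x N : Fin n → ℝ) : ℝ :=
  a + (∑ k, (N k - 1) * x k) + (∏ k, (1 + x k)) - 1

noncomputable def sVec (n : ℕ) (a : ℝ) (L x N : Fin n → ℝ) : Fin n → ℝ :=
  fun i => N i * L i * x i / Xfun n a x N

noncomputable def hfun (n : ℕ) (a : ℝ) (x : Fin n → ℝ) : ℝ :=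
  (∑ i, x i / (1 + x i)) + (1 - a) / ∏ j, (1 + x j)

def rateRegion (n : ℕ) (a : ℝ) (L Nlo Nhi : Fin n → ℝ) : Set (Fin n → ℝ) :=
  {u | ∃ x N : Fin n → ℝ, (∀ i, 0 ≤ x i) ∧ (∀ i, Nlo i ≤ N i ∧ N i ≤ Nhi i) ∧
    u = sVec n a L x N}

noncomputable def alpha (n : ℕ) (L Nhi xs : Fin n → ℝ) (i : Fin n) : ℝ :=
  (Nhi i - 1 + ∏ j ∈ Finset.univ.erase i, (1 + xs j)) / (L i * Nhi i)

def Cset (n : ℕ) (L Nhi xs : Fin n → ℝ) : Set (Fin n → ℝ) :=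
  {sv | (∀ i, 0 ≤ sv i) ∧ ∑ i, alpha n L Nhi xs i * sv i ≤ 1}

open Topology

section ProdOneAdd

variable {ι : Type*}

theorem prod_one_add_add_sum_sub_le {s : Finset ι} {w v : ι → ℝ} (hw : ∀ i ∈ s, 0 ≤ w i)
    (hwv : ∀ i ∈ s, w i ≤ v i) :
    ∏ i ∈ s, (1 + w i) + ∑ i ∈ s, (v i - w i) ≤ ∏ i ∈ s, (1 + v i) := by
  classical
  induction s using Finset.induction_on with
  | empty => simp
  | insert b s hb ih =>
    simp only [forall_mem_insert] at hw hwv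
    have h1 : 1 ≤ ∏ i ∈ s, (1 + w i) :=
      one_le_prod fun i hi => le_add_of_nonneg_right (hw.2 i hi)
    have hsum : 0 ≤ ∑ i ∈ s, (v i - w i) := sum_nonneg fun i hi => sub_nonneg.2 (hwv.2 i hi)
    rw [prod_insert hb, prod_insert hb, sum_insert hb]
    nlinarith [ih hw.2 hwv.2, hw.1, hwv.1]

/-- The second elementary symmetric function `∑_{i < j} β i * β j`. -/
noncomputable def pairSum (s : Finset ι) (β : ι → ℝ) : ℝ :=
  ((∑ i ∈ s, β i) ^ 2 - ∑ i ∈ s, β i ^ 2) / 2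

theorem pairSum_nonneg {s : Finset ι} {β : ι → ℝ} (hβ : ∀ i ∈ s, 0 ≤ β i) :
    0 ≤ pairSum s β := by
  have := sum_sq_le_sq_sum_of_nonneg hβ
  unfold pairSum
  linarith

variable [DecidableEq ι]

theorem mul_le_pairSum {s : Finset ι} {β : ι → ℝ} (hβ : ∀ i ∈ s, 0 ≤ β i) {i j : ι}
    (hi : i ∈ s) (hj : j ∈ s) (hij : i ≠ j) : β i * β j ≤ pairSum s β := by
  have hβ' : ∀ k ∈ s.erase i, 0 ≤ β k := fun k hk => hβ k (mem_of_mem_erase hk)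
  have hj' : β j ≤ ∑ k ∈ s.erase i, β k := single_le_sum hβ' (mem_erase.2 ⟨hij.symm, hj⟩)
  have hsq := sum_sq_le_sq_sum_of_nonneg hβ'
  unfold pairSum
  rw [← add_sum_erase s β hi, ← add_sum_erase s (β · ^ 2) hi]
  nlinarith [mul_le_mul_of_nonneg_left hj' (hβ i hi)]

theorem sum_mul_prod_erase_insert {s : Finset ι} {b : ι} (hb : b ∉ s) (β g : ι → ℝ) :
    ∑ i ∈ insert b s, β i * ∏ j ∈ (insert b s).erase i, g j
      = β b * ∏ j ∈ s, g j + g b * ∑ i ∈ s, β i * ∏ j ∈ s.erase i, g j := by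
  rw [sum_insert hb, erase_insert hb, mul_sum]
  congr 1
  refine sum_congr rfl fun i hi => ?_
  rw [erase_insert_of_ne (ne_of_mem_of_not_mem hi hb).symm,
    prod_insert fun h => hb (mem_of_mem_erase h)]
  ring

theorem prod_one_add_mul_ge {s : Finset ι} {β : ι → ℝ} (hβ : ∀ i ∈ s, 0 ≤ β i) {c τ : ℝ}
    (hc : 0 ≤ c) (hτ : 0 ≤ τ) :
    ∏ i ∈ s, (1 + c * β i) + (τ - c) * ∑ i ∈ s, β i * ∏ j ∈ s.erase i, (1 + c * β j)
      + (τ - c) ^ 2 * pairSum s β ≤ ∏ i ∈ s, (1 + τ * β i) := by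
  induction s using Finset.induction_on with
  | empty => simp [pairSum]
  | insert b s hb ih =>
    simp only [forall_mem_insert] at hβ
    obtain ⟨hβb, hβ⟩ := hβ
    have hA : ∑ i ∈ s, β i ≤ ∑ i ∈ s, β i * ∏ j ∈ s.erase i, (1 + c * β j) :=
      sum_le_sum fun i hi => le_mul_of_one_le_right (hβ i hi)
        (one_le_prod fun j hj => le_add_of_nonneg_right
          (mul_nonneg hc (hβ j (mem_of_mem_erase hj))))
    have hP : 1 ≤ ∏ i ∈ s, (1 + c * β i) :=
      one_le_prod fun i hi => le_add_of_nonneg_right (mul_nonneg hc (hβ i hi))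
    have hpair : pairSum (insert b s) β = β b * ∑ i ∈ s, β i + pairSum s β := by
      simp only [pairSum, sum_insert hb]; ring
    rw [prod_insert hb, prod_insert hb, sum_mul_prod_erase_insert hb, hpair]
    have ih' := mul_le_mul_of_nonneg_left (ih hβ) (by positivity : 0 ≤ 1 + τ * β b)
    nlinarith [mul_nonneg (mul_nonneg (sq_nonneg (τ - c)) hβb) (sub_nonneg.2 hA),
      mul_nonneg (mul_nonneg (mul_nonneg (sq_nonneg (τ - c)) hβb) (pairSum_nonneg hβ)) hτ,
      sum_nonneg hβ]

end ProdOneAdd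

theorem eventually_pos_of_hasDerivAt {f : ℝ → ℝ} {f' x : ℝ} (hf : HasDerivAt f f' x)
    (hfx : f x = 0) (hf' : 0 < f') : ∀ᶠ y in 𝓝[>] x, 0 < f y := by
  filter_upwards [((hasDerivAt_iff_tendsto_slope.1 hf).mono_left (nhdsGT_le_nhdsNE x)).eventually
    (eventually_gt_nhds hf'), self_mem_nhdsWithin] with y hslope hy
  exact pos_of_slope_pos hy hslope hfx

section RateRegion

variable {n : ℕ} {a : ℝ}

theorem le_Xfun {x N : Fin n → ℝ} (hx : ∀ i, 0 ≤ x i) (hN : ∀ i, 1 ≤ N i) :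
    a ≤ Xfun n a x N := by
  have h1 : 1 ≤ ∏ k, (1 + x k) := one_le_prod fun i _ => le_add_of_nonneg_right (hx i)
  have h2 : 0 ≤ ∑ k, (N k - 1) * x k :=
    sum_nonneg fun i _ => mul_nonneg (by linarith [hN i]) (hx i)
  unfold Xfun
  linarith

theorem rateRegion_nonneg {L Nlo Nhi y : Fin n → ℝ} (ha : 0 < a) (hL : ∀ i, 0 < L i)
    (hNlo : ∀ i, 1 ≤ Nlo i) (hy : y ∈ rateRegion n a L Nlo Nhi) (i : Fin n) : 0 ≤ y i := by
  obtain ⟨x, N, hx, hN, rfl⟩ := hy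
  have hN1 : ∀ i, 1 ≤ N i := fun i => (hNlo i).trans (hN i).1
  have hX := le_Xfun (a := a) hx hN1
  exact div_nonneg (mul_nonneg (mul_nonneg (by linarith [hN1 i]) (hL i).le) (hx i)) (by linarith)

theorem Xfun_le_Xfun {z x M N : Fin n → ℝ} (hz : ∀ i, 0 ≤ z i) (hzx : ∀ i, z i ≤ x i)
    (hzN : ∀ i, M i * z i = N i * x i) : Xfun n a z M ≤ Xfun n a x N := by
  have hmono := prod_one_add_add_sum_sub_le (s := univ) (fun i _ => hz i) fun i _ => hzx i
  have hsum : ∑ k, (M k - 1) * z k = ∑ k, (N k - 1) * x k + ∑ k, (x k - z k) := by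
    rw [← sum_add_distrib]
    exact sum_congr rfl fun k _ => by linear_combination hzN k
  unfold Xfun
  linarith

noncomputable def scaledRate (L M s : Fin n → ℝ) : Fin n → ℝ :=
  fun i => s i / (M i * L i)

theorem scaledRate_sVec {L M x : Fin n → ℝ} (hL : ∀ i, L i ≠ 0) (hM : ∀ i, M i ≠ 0) :
    scaledRate L M (sVec n a L x M) = (Xfun n a x M)⁻¹ • x := by
  funext i
  simp only [scaledRate, sVec, Pi.smul_apply, smul_eq_mul]
  field_simp [hL i, hM i]

theorem scaledRate_segment {L M s x u : Fin n → ℝ} {c t : ℝ} (hc : c ≠ 0)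
    (hs : scaledRate L M s = c⁻¹ • x) :
    scaledRate L M ((1 - t) • s + t • u) = c⁻¹ • ((1 - t) • x + t • c • scaledRate L M u) := by
  funext i
  have hsi := congrFun hs i
  simp only [scaledRate, Pi.add_apply, Pi.smul_apply, smul_eq_mul] at hsi ⊢
  rw [add_div, mul_div_assoc, mul_div_assoc, hsi]
  field_simp

theorem exists_Xfun_smul_scaledRate_le {L Nlo Nhi y : Fin n → ℝ} (ha : 0 < a)
    (hL : ∀ i, 0 < L i) (hNlo : ∀ i, 1 ≤ Nlo i) (hNhi : ∀ i, 0 < Nhi i)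
    (hy : y ∈ rateRegion n a L Nlo Nhi) :
    ∃ τ, 0 < τ ∧ Xfun n a (τ • scaledRate L Nhi y) Nhi ≤ τ := by
  obtain ⟨x, N, hx, hN, rfl⟩ := hy
  have hN1 : ∀ i, 1 ≤ N i := fun i => (hNlo i).trans (hN i).1
  have hτ : 0 < Xfun n a x N := ha.trans_le (le_Xfun hx hN1)
  have hz : Xfun n a x N • scaledRate L Nhi (sVec n a L x N) = fun i => N i * x i / Nhi i := by
    funext i
    simp only [scaledRate, sVec, Pi.smul_apply, smul_eq_mul]
    field_simp [(hL i).ne', (hNhi i).ne', hτ.ne']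
  refine ⟨_, hτ, ?_⟩
  rw [hz]
  refine Xfun_le_Xfun (fun i => by have := hx i; have := hN1 i; have := hNhi i; positivity)
    (fun i => (div_le_iff₀ (hNhi i)).2 ?_) fun i => mul_div_cancel₀ _ (hNhi i).ne'
  nlinarith [hx i, (hN i).2]

/-- The derivative of `τ ↦ Xfun n a (τ • β) M - τ` at `τ = c`. -/
noncomputable def xSlope (M β : Fin n → ℝ) (c : ℝ) : ℝ :=
  ∑ i, (M i - 1 + ∏ j ∈ univ.erase i, (1 + c * β j)) * β i - 1

theorem Xfun_smul_sub_ge {M β : Fin n → ℝ} (hβ : ∀ i, 0 ≤ β i) {c τ : ℝ} (hc : 0 ≤ c)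
    (hτ : 0 ≤ τ) :
    Xfun n a (c • β) M - c + (τ - c) * xSlope M β c + (τ - c) ^ 2 * pairSum univ β
      ≤ Xfun n a (τ • β) M - τ := by
  have hprod := prod_one_add_mul_ge (s := univ) (fun i _ => hβ i) hc hτ
  have hlin : ∀ r : ℝ, ∑ k, (M k - 1) * (r * β k) = r * ∑ k, (M k - 1) * β k := fun r => by
    rw [mul_sum]; exact sum_congr rfl fun k _ => by ring
  have hslope : xSlope M β c = ∑ k, (M k - 1) * β k
      + ∑ i, β i * ∏ j ∈ univ.erase i, (1 + c * β j) - 1 := by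
    rw [xSlope, ← sum_add_distrib]
    exact congrArg (· - 1) (sum_congr rfl fun i _ => by ring)
  simp only [Xfun, Pi.smul_apply, smul_eq_mul, hlin, hslope]
  nlinarith [hprod]

theorem discriminant_le_of_mem_rateRegion {L Nlo Nhi y : Fin n → ℝ} (ha : 0 < a)
    (hL : ∀ i, 0 < L i) (hNlo : ∀ i, 1 ≤ Nlo i) (hNhi : ∀ i, 0 < Nhi i)
    (hy : y ∈ rateRegion n a L Nlo Nhi) {c : ℝ} (hc : 0 ≤ c) :
    4 * pairSum univ (scaledRate L Nhi y) * (Xfun n a (c • scaledRate L Nhi y) Nhi - c)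
      ≤ xSlope Nhi (scaledRate L Nhi y) c ^ 2 := by
  obtain ⟨τ, hτ, hXτ⟩ := exists_Xfun_smul_scaledRate_le ha hL hNlo hNhi hy
  have hβ : ∀ i, 0 ≤ scaledRate L Nhi y i := fun i =>
    div_nonneg (rateRegion_nonneg ha hL hNlo hy i) (mul_pos (hNhi i) (hL i)).le
  have hq := Xfun_smul_sub_ge (a := a) (M := Nhi) hβ hc hτ.le
  have hE := pairSum_nonneg (s := univ) fun i _ => hβ i
  nlinarith [sq_nonneg (2 * pairSum univ (scaledRate L Nhi y) * (τ - c)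
    + xSlope Nhi (scaledRate L Nhi y) c)]

theorem sum_mul_prod_erase_eq_of_hfun_eq_one {x : Fin n → ℝ} (hx : ∀ i, 0 ≤ x i)
    (hB : hfun n a x = 1) :
    ∑ i, x i * ∏ j ∈ univ.erase i, (1 + x j) = ∏ j, (1 + x j) - 1 + a := by
  have hx1 : ∀ i, 0 < 1 + x i := fun i => by linarith [hx i]
  have hP : 0 < ∏ j, (1 + x j) := prod_pos fun i _ => hx1 i
  have hterm : ∀ i, x i * ∏ j ∈ univ.erase i, (1 + x j) = x i / (1 + x i) * ∏ j, (1 + x j) :=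
    fun i => by
      rw [← mul_prod_erase univ (fun j => 1 + x j) (mem_univ i)]
      field_simp [(hx1 i).ne']
  have hsum : ∑ i, x i / (1 + x i) = 1 - (1 - a) / ∏ j, (1 + x j) := by
    rw [hfun] at hB; linarith
  rw [sum_congr rfl fun i _ => hterm i, ← sum_mul, hsum]
  field_simp
  ring

theorem sum_mul_eq_Xfun_of_hfun_eq_one {x : Fin n → ℝ} (hx : ∀ i, 0 ≤ x i)
    (hB : hfun n a x = 1) (M : Fin n → ℝ) :
    ∑ i, (M i - 1 + ∏ j ∈ univ.erase i, (1 + x j)) * x i = Xfun n a x M := by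
  have hsplit : ∀ i, (M i - 1 + ∏ j ∈ univ.erase i, (1 + x j)) * x i
      = (M i - 1) * x i + x i * ∏ j ∈ univ.erase i, (1 + x j) := fun i => by ring
  rw [sum_congr rfl fun i _ => hsplit i, sum_add_distrib,
    sum_mul_prod_erase_eq_of_hfun_eq_one hx hB, Xfun]
  ring

theorem exists_ne_pos_pos_of_hfun_eq_one (ha : 0 < a) {x : Fin n → ℝ} (hx : ∀ i, 0 ≤ x i)
    (hB : hfun n a x = 1) : ∃ i j, i ≠ j ∧ 0 < x i ∧ 0 < x j := by
  have key := sum_mul_prod_erase_eq_of_hfun_eq_one hx hB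
  by_contra! hsupp
  by_cases hk : ∃ k, 0 < x k
  · obtain ⟨k, hk⟩ := hk
    have hzero : ∀ j ≠ k, x j = 0 := fun j hj => le_antisymm (hsupp k j hj.symm hk) (hx j)
    have hπ : ∏ j ∈ univ.erase k, (1 + x j) = 1 :=
      prod_eq_one fun j hj => by rw [hzero j (ne_of_mem_erase hj), add_zero]
    rw [sum_eq_single k (fun j _ hj => by rw [hzero j hj, zero_mul]) (by simp),
      ← mul_prod_erase univ (fun j => 1 + x j) (mem_univ k), hπ] at key
    linarith
  · push Not at hk
    have hzero : ∀ j, x j = 0 := fun j => le_antisymm (hk j) (hx j)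
    simp [hzero] at key
    linarith

theorem hasDerivAt_Xfun_lineMap (p q M : Fin n → ℝ) :
    HasDerivAt (fun t : ℝ => Xfun n a ((1 - t) • p + t • q) M)
      (∑ i, (M i - 1 + ∏ j ∈ univ.erase i, (1 + p j)) * (q i - p i)) 0 := by
  have hline : ∀ i, HasDerivAt (fun t : ℝ => (1 - t) * p i + t * q i) (q i - p i) 0 := fun i => by
    have e : (fun t : ℝ => (1 - t) * p i + t * q i) = fun t => p i + (q i - p i) * t := by
      funext t; ring
    rw [e]
    simpa using ((hasDerivAt_id (0 : ℝ)).const_mul (q i - p i)).const_add (p i)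
  have hsum := HasDerivAt.fun_sum fun i (_ : i ∈ univ) => (hline i).const_mul (M i - 1)
  have hprod := HasDerivAt.fun_finsetProd fun i (_ : i ∈ univ) => (hline i).const_add 1
  have hX : (fun t : ℝ => Xfun n a ((1 - t) • p + t • q) M) = fun t => a
      + ∑ i, (M i - 1) * ((1 - t) * p i + t * q i) + ∏ i, (1 + ((1 - t) * p i + t * q i)) - 1 := by
    funext t; simp [Xfun]
  rw [hX]
  refine (((hsum.const_add a).add hprod).sub_const 1).congr_deriv ?_
  simp [add_mul, sum_add_distrib]

theorem eventually_sq_xSlope_lt {p q M : Fin n → ℝ} (ha : 0 < a) (hp : ∀ i, 0 ≤ p i)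
    (hB : hfun n a p = 1) (hX : 0 < Xfun n a p M)
    (hq : 0 < ∑ i, (M i - 1 + ∏ j ∈ univ.erase i, (1 + p j)) * (q i - p i)) :
    ∀ᶠ t in 𝓝[>] (0 : ℝ), xSlope M ((Xfun n a p M)⁻¹ • ((1 - t) • p + t • q)) (Xfun n a p M) ^ 2
      < 4 * pairSum univ ((Xfun n a p M)⁻¹ • ((1 - t) • p + t • q))
        * (Xfun n a ((1 - t) • p + t • q) M - Xfun n a p M) := by
  set X := Xfun n a p M
  have hvalue := (hasDerivAt_Xfun_lineMap (a := a) p q M).sub_const X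
  have hslope : DifferentiableAt ℝ (fun t : ℝ => xSlope M (X⁻¹ • ((1 - t) • p + t • q)) X) 0 := by
    simp only [xSlope, Pi.smul_apply, Pi.add_apply, smul_eq_mul]
    fun_prop
  have hpair : DifferentiableAt ℝ (fun t : ℝ => pairSum univ (X⁻¹ • ((1 - t) • p + t • q))) 0 := by
    simp only [pairSum, Pi.smul_apply, Pi.add_apply, smul_eq_mul]
    fun_prop
  have hslope0 : xSlope M (X⁻¹ • p) X = 0 := by
    simp only [xSlope, Pi.smul_apply, smul_eq_mul, mul_inv_cancel_left₀ hX.ne',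
      mul_left_comm _ X⁻¹, ← mul_sum, sum_mul_eq_Xfun_of_hfun_eq_one hp hB]
    exact sub_eq_zero.2 (inv_mul_cancel₀ hX.ne')
  have hpair0 : 0 < pairSum univ (X⁻¹ • p) := by
    obtain ⟨i, j, hij, hi, hj⟩ := exists_ne_pos_pos_of_hfun_eq_one ha hp hB
    exact (mul_pos (smul_pos (inv_pos.2 hX) hi) (smul_pos (inv_pos.2 hX) hj)).trans_le
      (mul_le_pairSum (fun k _ => smul_nonneg (inv_pos.2 hX).le (hp k)) (mem_univ i)
        (mem_univ j) hij)
  have hf := ((hpair.hasDerivAt.mul hvalue).const_mul 4).sub (hslope.hasDerivAt.pow 2)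
  simp only [sub_zero, one_smul, zero_smul, add_zero, hslope0] at hf
  filter_upwards [eventually_pos_of_hasDerivAt hf (by simp [X, hslope0])
    (by nlinarith [mul_pos hpair0 hq])] with t ht
  simp only [Pi.sub_apply, Pi.mul_apply, Pi.pow_apply] at ht
  linarith

theorem sum_alpha_mul (L Nhi xs y : Fin n → ℝ) :
    ∑ i, alpha n L Nhi xs i * y i
      = ∑ i, (Nhi i - 1 + ∏ j ∈ univ.erase i, (1 + xs j)) * scaledRate L Nhi y i :=
  sum_congr rfl fun i _ => by simp only [alpha, scaledRate]; ring

end RateRegion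

theorem stmt1_general (n : ℕ) (a : ℝ) (ha0 : 0 < a)
    (L Nlo Nhi : Fin n → ℝ) (hL : ∀ i, 0 < L i)
    (hNlo : ∀ i, 1 ≤ Nlo i) (hNhi : ∀ i, Nlo i ≤ Nhi i)
    (xs : Fin n → ℝ) (hxs : ∀ i, 0 ≤ xs i) (hB : hfun n a xs = 1)
    (D : Set (Fin n → ℝ)) (hDconv : Convex ℝ D)
    (hDR : D ⊆ rateRegion n a L Nlo Nhi)
    (hDs : sVec n a L xs Nhi ∈ D) :
    D ⊆ Cset n L Nhi xs := by
  intro u hu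
  refine ⟨rateRegion_nonneg ha0 hL hNlo (hDR hu), ?_⟩
  by_contra! hu1
  have hNhi1 : ∀ i, 1 ≤ Nhi i := fun i => (hNlo i).trans (hNhi i)
  have hNhi0 : ∀ i, 0 < Nhi i := fun i => one_pos.trans_le (hNhi1 i)
  set X := Xfun n a xs Nhi
  have hX : 0 < X := ha0.trans_le (le_Xfun hxs hNhi1)
  have hs : scaledRate L Nhi (sVec n a L xs Nhi) = X⁻¹ • xs :=
    scaledRate_sVec (hL · |>.ne') (hNhi0 · |>.ne')
  have hdir : 0 < ∑ i, (Nhi i - 1 + ∏ j ∈ univ.erase i, (1 + xs j))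
      * ((X • scaledRate L Nhi u) i - xs i) := by
    simp only [Pi.smul_apply, smul_eq_mul, mul_sub, sum_sub_distrib, mul_left_comm _ X,
      ← mul_sum, ← sum_alpha_mul, sum_mul_eq_Xfun_of_hfun_eq_one hxs hB]
    nlinarith
  obtain ⟨t, hlt, ht0, ht1⟩ :=
    ((eventually_sq_xSlope_lt ha0 hxs hB hX hdir).and (Ioc_mem_nhdsGT one_pos)).exists
  have hle := discriminant_le_of_mem_rateRegion ha0 hL hNlo hNhi0
    (hDR (hDconv hDs hu (sub_nonneg.2 ht1) ht0.le (sub_add_cancel 1 t))) hX.le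
  rw [scaledRate_segment hX.ne' hs, smul_inv_smul₀ hX.ne'] at hle
  linarith

theorem stmt1 (n : ℕ) (hn : 2 ≤ n) (a : ℝ) (ha0 : 0 < a) (ha1 : a < 1)
    (L Nlo Nhi : Fin n → ℝ) (hL : ∀ i, 0 < L i)
    (hNlo : ∀ i, 1 ≤ Nlo i) (hNhi : ∀ i, Nlo i ≤ Nhi i)
    (xs : Fin n → ℝ) (hxs : ∀ i, 0 ≤ xs i) (hB : hfun n a xs = 1)
    (D : Set (Fin n → ℝ)) (hDconv : Convex ℝ D)
    (hDR : D ⊆ rateRegion n a L Nlo Nhi)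
    (hDs : sVec n a L xs Nhi ∈ D) :
    D ⊆ Cset n L Nhi xs :=
  stmt1_general n a ha0 L Nlo Nhi hL hNlo hNhi xs hxs hB D hDconv hDR hDs
end

section
/- (Unique maximizer along rays.) Fix x̄ ∈ (0,∞)^n and N with N_i ≥ 1 for all i, and define f(λ) = λ / X(λ x̄, N) for λ ≥ 0. Then there is a unique λ* > 0 with h(λ* x̄) = 1, f is strictly increasing on [0, λ*] and strictly decreasing on [λ*, ∞); in particular λ* is the unique maximizer of f on [0,∞). -/
open Finset

/-!
Along the ray write `P t = ∏ k, (1 + t * x̄ k)`, so that `X (t • x̄) = a - 1 + t S + P t` with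
`S = ∑ (N k - 1) x̄ k`. The numerator of the derivative of `t / X (t • x̄)` is
`X - t X' = P t * (1 - h (t • x̄))`, so `f` rises while `h < 1` and falls while `h > 1`.
In the variables `u k = (1 + y k)⁻¹ ∈ (0, 1]` one has `h y = ∑ (1 - u k) + (1 - a) ∏ u k`, and
`∏ u - ∏ w ≤ ∑ (u - w)` for `0 ≤ w ≤ u ≤ 1` makes `h` strictly increasing along the ray. It starts
at `1 - a < 1` and exceeds `1` once every coordinate is `≥ 1`, as then each of the `n ≥ 2`
summands `y k / (1 + y k)` is at least `1 / 2`; so it crosses `1` exactly once.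
-/

theorem Finset.prod_sub_prod_le_sum_sub {ι R : Type*} [CommRing R] [LinearOrder R]
    [IsStrictOrderedRing R] {s : Finset ι} {f g : ι → R}
    (hg : ∀ i ∈ s, 0 ≤ g i) (hgf : ∀ i ∈ s, g i ≤ f i) (hf : ∀ i ∈ s, f i ≤ 1) :
    ∏ i ∈ s, f i - ∏ i ∈ s, g i ≤ ∑ i ∈ s, (f i - g i) := by
  classical
  induction s using Finset.induction with
  | empty => simp
  | @insert i s hi ih =>
    simp only [forall_mem_insert] at hg hgf hf
    rw [prod_insert hi, prod_insert hi, sum_insert hi]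
    have hG : ∏ j ∈ s, g j ≤ ∏ j ∈ s, f j := prod_le_prod hg.2 hgf.2
    have hG0 : 0 ≤ ∏ j ∈ s, g j := prod_nonneg hg.2
    have hG1 : ∏ j ∈ s, g j ≤ 1 :=
      prod_le_one hg.2 fun j hj => (hgf.2 j hj).trans (hf.2 j hj)
    -- `f i F - g i G = f i (F - G) + (f i - g i) G` with `f i, G ≤ 1`
    nlinarith [ih hg.2 hgf.2 hf.2, mul_le_mul_of_nonneg_right hf.1 (sub_nonneg.2 hG),
      mul_le_mul_of_nonneg_left hG1 (sub_nonneg.2 hgf.1)]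

lemma Xfun_smul (n : ℕ) (a t : ℝ) (x N : Fin n → ℝ) :
    Xfun n a (t • x) N = a - 1 + t * ∑ k, (N k - 1) * x k + ∏ k, (1 + t * x k) := by
  simp only [Xfun, Pi.smul_apply, smul_eq_mul, mul_sum]
  rw [sum_congr rfl fun k _ => mul_left_comm (N k - 1) t (x k)]
  ring

lemma Xfun_pos {n : ℕ} {a : ℝ} {x N : Fin n → ℝ} (ha : 0 < a) (hx : ∀ i, 0 ≤ x i)
    (hN : ∀ i, 1 ≤ N i) : 0 < Xfun n a x N := by
  have hS : 0 ≤ ∑ k, (N k - 1) * x k :=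
    sum_nonneg fun k _ => mul_nonneg (sub_nonneg.2 (hN k)) (hx k)
  have hP : 1 ≤ ∏ k, (1 + x k) := Finset.one_le_prod fun k _ => le_add_of_nonneg_right (hx k)
  unfold Xfun
  linarith

lemma hfun_eq_sum_add_prod_inv {n : ℕ} (a : ℝ) {y : Fin n → ℝ} (hy : ∀ i, 1 + y i ≠ 0) :
    hfun n a y = ∑ i, (1 - (1 + y i)⁻¹) + (1 - a) * ∏ i, (1 + y i)⁻¹ := by
  rw [hfun, div_eq_mul_inv, prod_inv_distrib]
  congr 1
  refine sum_congr rfl fun i _ => ?_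
  field_simp [hy i]
  ring

lemma hfun_lt_hfun {n : ℕ} [NeZero n] {a : ℝ} (ha0 : 0 < a) (ha1 : a ≤ 1) {y z : Fin n → ℝ}
    (hy : ∀ i, 0 ≤ y i) (hyz : ∀ i, y i < z i) : hfun n a y < hfun n a z := by
  have hy1 : ∀ i, 0 < 1 + y i := fun i => by linarith [hy i]
  have hz1 : ∀ i, 0 < 1 + z i := fun i => by linarith [hy i, hyz i]
  rw [hfun_eq_sum_add_prod_inv a fun i => (hy1 i).ne',
    hfun_eq_sum_add_prod_inv a fun i => (hz1 i).ne']
  set u := fun i => (1 + y i)⁻¹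
  set w := fun i => (1 + z i)⁻¹
  have hwu : ∀ i, w i < u i := fun i => inv_strictAnti₀ (hy1 i) (by linarith [hyz i])
  have hu1 : ∀ i, u i ≤ 1 := fun i => inv_le_one_of_one_le₀ (by linarith [hy i])
  have hprod : ∏ i, u i - ∏ i, w i ≤ ∑ i, (u i - w i) :=
    prod_sub_prod_le_sum_sub (fun i _ => (inv_pos.2 (hz1 i)).le) (fun i _ => (hwu i).le)
      fun i _ => hu1 i
  have hsum : 0 < ∑ i, (u i - w i) := sum_pos (fun i _ => sub_pos.2 (hwu i)) univ_nonempty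
  have hdiff : ∑ i, (1 - w i) - ∑ i, (1 - u i) = ∑ i, (u i - w i) := by
    rw [← sum_sub_distrib]; exact sum_congr rfl fun i _ => by ring
  nlinarith [mul_le_mul_of_nonneg_left hprod (sub_nonneg.2 ha1)]

lemma hfun_zero (n : ℕ) (a : ℝ) : hfun n a 0 = 1 - a := by
  simp [hfun]

lemma one_lt_hfun {n : ℕ} (hn : 2 ≤ n) {a : ℝ} (ha1 : a < 1) {x : Fin n → ℝ}
    (hx : ∀ i, 1 ≤ x i) : 1 < hfun n a x := by
  have hhalf : ∀ i, 1 / 2 ≤ x i / (1 + x i) := fun i => by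
    rw [div_le_div_iff₀ two_pos (by linarith [hx i])]; linarith [hx i]
  have hsum : (n : ℝ) * (1 / 2) ≤ ∑ i, x i / (1 + x i) := by
    simpa using card_nsmul_le_sum univ _ _ fun i _ => hhalf i
  have hrest : 0 < (1 - a) / ∏ j, (1 + x j) :=
    div_pos (by linarith) (prod_pos fun j _ => by linarith [hx j])
  have hn' : (2 : ℝ) ≤ n := by exact_mod_cast hn
  rw [hfun]
  nlinarith

lemma hasDerivAt_prod_one_add_mul {ι : Type*} [Fintype ι] (x : ι → ℝ) {t : ℝ}
    (ht : ∀ k, 1 + t * x k ≠ 0) :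
    HasDerivAt (fun s => ∏ k, (1 + s * x k))
      ((∏ k, (1 + t * x k)) * ∑ k, x k / (1 + t * x k)) t := by
  classical
  have h := HasDerivAt.fun_finsetProd (u := univ) (f := fun k s => 1 + s * x k) (f' := x)
    fun k _ => by simpa using ((hasDerivAt_id t).mul_const (x k)).const_add 1
  refine h.congr_deriv ?_
  rw [mul_sum]
  refine sum_congr rfl fun k _ => ?_
  rw [← mul_prod_erase univ _ (mem_univ k), smul_eq_mul]
  field_simp [ht k]

lemma continuousOn_hfun_smul (n : ℕ) (a : ℝ) {x : Fin n → ℝ} (hx : ∀ i, 0 ≤ x i) :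
    ContinuousOn (fun t : ℝ => hfun n a (t • x)) (Set.Ici 0) := by
  have hpos : ∀ t ∈ Set.Ici (0 : ℝ), ∀ i, 0 < 1 + t * x i := fun t ht i => by
    nlinarith [mul_nonneg (Set.mem_Ici.1 ht) (hx i)]
  simp only [hfun, Pi.smul_apply, smul_eq_mul]
  refine ContinuousOn.add (continuousOn_finsetSum _ fun i _ => ?_) ?_
  · exact ContinuousOn.div (by fun_prop) (by fun_prop) fun t ht => (hpos t ht i).ne'
  · exact ContinuousOn.div (by fun_prop) (by fun_prop)
      fun t ht => (prod_pos fun i _ => hpos t ht i).ne'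

lemma hasDerivAt_div_Xfun_smul {n : ℕ} {a t : ℝ} {x N : Fin n → ℝ}
    (hx : ∀ k, 1 + t * x k ≠ 0) (hX : Xfun n a (t • x) N ≠ 0) :
    HasDerivAt (fun s => s / Xfun n a (s • x) N)
      ((∏ k, (1 + t * x k)) / Xfun n a (t • x) N ^ 2 * (1 - hfun n a (t • x))) t := by
  set S := ∑ k, (N k - 1) * x k
  set Q := ∑ k, x k / (1 + t * x k)
  have hXfun : (fun s => Xfun n a (s • x) N) = fun s => a - 1 + id s * S + ∏ k, (1 + s * x k) :=
    funext fun s => Xfun_smul n a s x N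
  have hden : HasDerivAt (fun s => Xfun n a (s • x) N) (S + (∏ k, (1 + t * x k)) * Q) t := by
    rw [hXfun]
    simpa only [one_mul] using (((hasDerivAt_id t).mul_const S).const_add (a - 1)).fun_add
      (hasDerivAt_prod_one_add_mul x hx)
  have hhfun : hfun n a (t • x) = t * Q + (1 - a) / ∏ k, (1 + t * x k) := by
    simp only [hfun, Pi.smul_apply, smul_eq_mul, Q, mul_sum, mul_div_assoc]
  have hP : ∏ k, (1 + t * x k) ≠ 0 := prod_ne_zero_iff.2 fun k _ => hx k
  refine ((hasDerivAt_id t).div hden hX).congr_deriv ?_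
  rw [Xfun_smul] at hX
  rw [hhfun, id, Xfun_smul]
  generalize ∏ k, (1 + t * x k) = P at hP hX ⊢
  -- `X - t X' = P (1 - h)`: the linear term `t S` cancels and `t P'/P` is the sum in `h`
  field_simp
  ring

lemma strictMonoOn_strictAntiOn_of_hasDerivAt {f φ c : ℝ → ℝ} {lam : ℝ} (hlam : 0 ≤ lam)
    (hφ : StrictMonoOn φ (Set.Ici 0)) (hφlam : φ lam = 1) (hc : ∀ t, 0 ≤ t → 0 < c t)
    (hf : ∀ t, 0 ≤ t → HasDerivAt f (c t * (1 - φ t)) t) :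
    StrictMonoOn f (Set.Icc 0 lam) ∧ StrictAntiOn f (Set.Ici lam) := by
  have hcont : ∀ s ⊆ Set.Ici (0 : ℝ), ContinuousOn f s := fun s hs t ht =>
    (hf t (hs ht)).continuousAt.continuousWithinAt
  constructor
  · refine strictMonoOn_of_deriv_pos (convex_Icc 0 lam) (hcont _ fun t ht => ht.1) ?_
    intro t ht
    rw [interior_Icc] at ht
    have : φ t < 1 := hφlam ▸ hφ ht.1.le hlam ht.2
    rw [(hf t ht.1.le).deriv]
    exact mul_pos (hc t ht.1.le) (by linarith)
  · refine strictAntiOn_of_deriv_neg (convex_Ici lam)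
      (hcont _ fun t ht => hlam.trans ht) ?_
    intro t ht
    rw [interior_Ici] at ht
    have ht0 : 0 ≤ t := hlam.trans ht.le
    have : 1 < φ t := hφlam ▸ hφ hlam ht0 ht
    rw [(hf t ht0).deriv]
    exact mul_neg_of_pos_of_neg (hc t ht0) (by linarith)

theorem stmt10 (n : ℕ) (hn : 2 ≤ n) (a : ℝ) (ha0 : 0 < a) (ha1 : a < 1)
    (xb : Fin n → ℝ) (hxb : ∀ i, 0 < xb i)
    (N : Fin n → ℝ) (hN : ∀ i, 1 ≤ N i) :
    ∃ lam : ℝ, 0 < lam ∧ hfun n a (lam • xb) = 1 ∧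
      (∀ μ : ℝ, 0 < μ → hfun n a (μ • xb) = 1 → μ = lam) ∧
      StrictMonoOn (fun t : ℝ => t / Xfun n a (t • xb) N) (Set.Icc 0 lam) ∧
      StrictAntiOn (fun t : ℝ => t / Xfun n a (t • xb) N) (Set.Ici lam) ∧
      (∀ t : ℝ, 0 ≤ t → t ≠ lam →
        t / Xfun n a (t • xb) N < lam / Xfun n a (lam • xb) N) := by
  have : NeZero n := ⟨by omega⟩
  have hray : ∀ t : ℝ, 0 ≤ t → ∀ i, 0 ≤ t * xb i := fun t ht i => mul_nonneg ht (hxb i).le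
  have hφ : StrictMonoOn (fun t : ℝ => hfun n a (t • xb)) (Set.Ici 0) := fun s hs t _ hst =>
    hfun_lt_hfun ha0 ha1.le (hray s hs) fun i => mul_lt_mul_of_pos_right hst (hxb i)
  set T := ∑ i, (xb i)⁻¹
  have hT : ∀ i, 1 ≤ (T • xb) i := fun i => by
    have hTi : (xb i)⁻¹ ≤ T := single_le_sum (fun j _ => (inv_pos.2 (hxb j)).le) (mem_univ i)
    calc 1 = (xb i)⁻¹ * xb i := (inv_mul_cancel₀ (hxb i).ne').symm
      _ ≤ T * xb i := mul_le_mul_of_nonneg_right hTi (hxb i).le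
  have hT0 : 0 < T := sum_pos (fun i _ => inv_pos.2 (hxb i)) univ_nonempty
  obtain ⟨lam, ⟨hlam0, -⟩, hlam⟩ := intermediate_value_Ioo hT0.le
    ((continuousOn_hfun_smul n a fun i => (hxb i).le).mono Set.Icc_subset_Ici_self)
    (show (1 : ℝ) ∈ Set.Ioo _ _ from ⟨by simp [hfun_zero, ha0], one_lt_hfun hn ha1 hT⟩)
  obtain ⟨hmono, hanti⟩ := strictMonoOn_strictAntiOn_of_hasDerivAt hlam0.le hφ hlam
    (fun t ht => div_pos (prod_pos fun k _ => by linarith [hray t ht k])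
      (pow_pos (Xfun_pos ha0 (hray t ht) hN) 2))
    fun t ht => hasDerivAt_div_Xfun_smul (fun k => by linarith [hray t ht k])
      (Xfun_pos ha0 (hray t ht) hN).ne'
  refine ⟨lam, hlam0, hlam, fun μ hμ hμ1 => hφ.injOn hμ.le hlam0.le (hμ1.trans hlam.symm),
    hmono, hanti, fun t ht htlam => ?_⟩
  rcases htlam.lt_or_gt with h | h
  · exact hmono ⟨ht, h.le⟩ ⟨hlam0.le, le_rfl⟩ h
  · exact hanti Set.self_mem_Ici h.le h
end
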